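/- arXiv:quant-ph/0211174 — 3 statements merged into one kernel-verified Lean document; each statement's English description precedes it below -/
import Mathlib

section
/- For any density matrix ρ on m qubits (i.e., any Hermitian positive semidefinite complex 2^m × 2^m matrix with trace 1), there exists a density matrix σ such that the completely mixed state M = (1/2^m)·I satisfies M = (1/2^m)·ρ + (1 - 1/2^m)·σ. -/
open scoped ComplexOrder

/-- A PSD matrix with trace 1 satisfies `1 - ρ` PSD. -/
lemma one_sub_posSemidef_aux {n : Type*} [Fintype n] [DecidableEq n]
    {ρ : Matrix n n ℂ} (hρ : ρ.PosSemidef) (hρtr : ρ.trace = 1) :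
    (1 - ρ).PosSemidef := by
  have hH := hρ.1
  have hsum : ∑ i, hH.eigenvalues i = 1 := by
    have h := congrArg Matrix.trace hH.spectral_theorem
    rw [hρtr, Unitary.conjStarAlgAut_apply, Matrix.trace_mul_cycle, Unitary.coe_star_mul_self, Matrix.one_mul,
      Matrix.trace_diagonal] at h
    have h2 : ((∑ i, hH.eigenvalues i : ℝ) : ℂ) = 1 := by
      push_cast
      simpa using h.symm
    exact_mod_cast h2
  have hle : ∀ i, hH.eigenvalues i ≤ 1 := fun i => by
    rw [← hsum]
    exact Finset.single_le_sum (fun j _ => hρ.eigenvalues_nonneg j) (Finset.mem_univ i)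
  have hdiag : (Matrix.diagonal (RCLike.ofReal ∘ fun i => 1 - hH.eigenvalues i) :
      Matrix n n ℂ).PosSemidef := by
    refine Matrix.posSemidef_diagonal_iff.mpr fun i => ?_
    have : (0:ℝ) ≤ 1 - hH.eigenvalues i := sub_nonneg.mpr (hle i)
    exact Complex.zero_le_real.mpr this
  have hmain := hdiag.mul_mul_conjTranspose_same
    (hH.eigenvectorUnitary : Matrix n n ℂ)
  have hdeq : (Matrix.diagonal (RCLike.ofReal ∘ fun i => 1 - hH.eigenvalues i) :
      Matrix n n ℂ) = 1 - Matrix.diagonal (RCLike.ofReal ∘ hH.eigenvalues) := by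
    ext i j
    rcases eq_or_ne i j with rfl | h
    · simp
    · simp [Matrix.diagonal_apply_ne _ h, Matrix.one_apply_ne h]
  rw [hdeq] at hmain
  have hexp : (hH.eigenvectorUnitary : Matrix n n ℂ) *
      (1 - Matrix.diagonal (RCLike.ofReal ∘ hH.eigenvalues)) *
      (hH.eigenvectorUnitary : Matrix n n ℂ).conjTranspose = 1 - ρ := by
    have hUs : (hH.eigenvectorUnitary : Matrix n n ℂ) *
        star (hH.eigenvectorUnitary : Matrix n n ℂ) = 1 :=
      Matrix.mem_unitaryGroup_iff.mp hH.eigenvectorUnitary.2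
    rw [Matrix.mul_sub, Matrix.mul_one, Matrix.sub_mul, ← Matrix.star_eq_conjTranspose,
      hUs, ← Unitary.conjStarAlgAut_apply (S := ℂ), ← hH.spectral_theorem]
  rwa [hexp] at hmain

/-- For any density matrix ρ on m qubits there exists a density matrix σ such that
the completely mixed state `(1/2^m) • 1` equals `(1/2^m) • ρ + (1 - 1/2^m) • σ`. -/
theorem completely_mixed_decomposition (m : ℕ)
    (ρ : Matrix (Fin (2 ^ m)) (Fin (2 ^ m)) ℂ)
    (hρ : ρ.PosSemidef) (hρtr : ρ.trace = 1) :
    ∃ σ : Matrix (Fin (2 ^ m)) (Fin (2 ^ m)) ℂ, σ.PosSemidef ∧ σ.trace = 1 ∧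
      ((1 / 2 ^ m : ℂ)) • (1 : Matrix (Fin (2 ^ m)) (Fin (2 ^ m)) ℂ) =
        (1 / 2 ^ m : ℂ) • ρ + (1 - 1 / 2 ^ m : ℂ) • σ := by
  rcases Nat.eq_zero_or_pos m with hm | hm
  · subst hm
    have hone : ρ = 1 := by
      ext i j
      fin_cases i; fin_cases j
      have h : ρ.trace = ρ 0 0 := by
        simp [Matrix.trace]
      simpa using (h.symm.trans hρtr)
    refine ⟨ρ, hρ, hρtr, ?_⟩
    simp [hone]
  · have hmne : m ≠ 0 := by omega
    have hltR : (1:ℝ) < 2 ^ m := one_lt_pow₀ (by norm_num) hmne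
    have hRne : ((2:ℝ) ^ m - 1) ≠ 0 := by linarith
    set c : ℝ := ((2:ℝ) ^ m - 1)⁻¹ with hc
    have hcpos : 0 < c := by
      rw [hc]; exact inv_pos.mpr (by linarith)
    have hcast : ((2:ℂ) ^ m - 1) = (((2:ℝ) ^ m - 1 : ℝ) : ℂ) := by push_cast; ring
    have h1ρ := one_sub_posSemidef_aux hρ hρtr
    refine ⟨(c : ℂ) • (1 - ρ), ?_, ?_, ?_⟩
    · constructor
      · unfold Matrix.IsHermitian
        rw [Matrix.conjTranspose_smul, h1ρ.1.eq]
        rw [Complex.star_def, Complex.conj_ofReal]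
      · intro x
        exact (h1ρ.smul (Complex.zero_le_real.mpr hcpos.le)).2 x
    · rw [Matrix.trace_smul, Matrix.trace_sub, hρtr, Matrix.trace_one, smul_eq_mul]
      have hcard : (Fintype.card (Fin (2 ^ m)) : ℂ) = (2 : ℂ) ^ m := by
        simp
      rw [hcard, hcast, ← Complex.ofReal_mul]
      norm_num [hc, inv_mul_cancel₀ hRne]
    · have key : (1 - 1 / 2 ^ m : ℂ) • ((c : ℂ) • (1 - ρ)) = (1 / 2 ^ m : ℂ) • (1 - ρ) := by
        rw [smul_smul]
        congr 1
        have h2ne : ((2:ℂ) ^ m) ≠ 0 := pow_ne_zero _ two_ne_zero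
        have hCne : ((2:ℂ) ^ m - 1) ≠ 0 := by
          rw [hcast]; exact_mod_cast hRne
        rw [hc]
        push_cast
        field_simp
      rw [key, smul_sub]
      abel
end

section
/- Let S be a uniformly random n-element subset of {1,…,n²} with sorted elements s₁ < ⋯ < s_n. Then for each 2 ≤ j ≤ n, P(s_j - s_{j-1} < n/8) ≤ 1/8, for n sufficiently large. -/
open Finset in
lemma rank_orderEmbOfFin {S : Finset ℕ} {k : ℕ} (h : S.card = k) (i : Fin k) :
    (S.filter (fun a => a < S.orderEmbOfFin h i)).card = i := by
  have heq : S.filter (fun a => a < S.orderEmbOfFin h i)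
      = (Finset.Iio i).image (fun l : Fin k => S.orderEmbOfFin h l) := by
    ext a
    simp only [Finset.mem_filter, Finset.mem_image, Finset.mem_Iio]
    constructor
    · rintro ⟨haS, hlt⟩
      have : a ∈ Set.range (S.orderEmbOfFin h) := by
        rw [S.range_orderEmbOfFin h]; exact haS
      obtain ⟨l, rfl⟩ := this
      exact ⟨l, (S.orderEmbOfFin h).strictMono.lt_iff_lt.mp hlt, rfl⟩
    · rintro ⟨l, hl, rfl⟩
      exact ⟨S.orderEmbOfFin_mem h l, (S.orderEmbOfFin h).strictMono hl⟩
  rw [heq, Finset.card_image_of_injective _ (S.orderEmbOfFin h).injective, Fin.card_Iio]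

lemma eq_orderEmbOfFin_of_rank {S : Finset ℕ} {k : ℕ} (h : S.card = k) {a : ℕ} (ha : a ∈ S)
    (i : Fin k) (hr : (S.filter (fun x => x < a)).card = i) : a = S.orderEmbOfFin h i := by
  have : a ∈ Set.range (S.orderEmbOfFin h) := by rw [S.range_orderEmbOfFin h]; exact ha
  obtain ⟨l, rfl⟩ := this
  congr 1
  have := rank_orderEmbOfFin h l
  apply Fin.ext
  omega

lemma orderEmbOfFin_erase {S : Finset ℕ} {n : ℕ} (hS : S.card = n) (i i' : Fin n)
    (hii : (i : ℕ) + 1 = i') (hT : (S.erase (S.orderEmbOfFin hS i)).card = n - 1)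
    (hi' : (i : ℕ) < n - 1) :
    (S.erase (S.orderEmbOfFin hS i)).orderEmbOfFin hT ⟨i, hi'⟩ = S.orderEmbOfFin hS i' := by
  set x := S.orderEmbOfFin hS i with hx
  set b := S.orderEmbOfFin hS i' with hb
  have hlt : x < b := (S.orderEmbOfFin hS).strictMono (by rw [Fin.lt_def]; omega)
  have hbmem : b ∈ S.erase x := Finset.mem_erase.mpr ⟨hlt.ne', S.orderEmbOfFin_mem hS i'⟩
  refine (eq_orderEmbOfFin_of_rank hT hbmem ⟨i, hi'⟩ ?_).symm
  rw [Finset.filter_erase]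
  have hxmem : x ∈ S.filter (fun a => a < b) :=
    Finset.mem_filter.mpr ⟨S.orderEmbOfFin_mem hS i, hlt⟩
  rw [Finset.card_erase_of_mem hxmem, rank_orderEmbOfFin hS i']
  simp only [Fin.val_mk]
  omega

lemma orderEmbOfFin_congr {S T : Finset ℕ} (hST : S = T) {k : ℕ} (hS : S.card = k)
    (hT : T.card = k) (i : Fin k) : S.orderEmbOfFin hS i = T.orderEmbOfFin hT i := by
  subst hST; rfl

open Classical in
/-- Gap estimate inside Proposition `pro:1`: for a uniformly random n-element subset
of {1,…,n²} with increasing enumeration s₁ < ⋯ < s_n, for each 2 ≤ j ≤ n the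
probability that s_j - s_{j-1} < n/8 is at most 1/8, for n sufficiently large. -/
theorem gap_probability :
    ∃ N₀ : ℕ, ∀ n : ℕ, N₀ ≤ n → ∀ j : ℕ, ∀ _hj2 : 2 ≤ j, ∀ _hjn : j ≤ n,
      ((((Finset.Icc 1 (n ^ 2)).powersetCard n).filter (fun s =>
          ∃ h : s.card = n,
            ((s.orderIsoOfFin h ⟨j - 1, by omega⟩ : ℕ) : ℝ) -
              ((s.orderIsoOfFin h ⟨j - 2, by omega⟩ : ℕ) : ℝ) < (n : ℝ) / 8)).card : ℝ) ≤
        (1 / 8 : ℝ) * (((Finset.Icc 1 (n ^ 2)).powersetCard n).card : ℝ) := by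
  refine ⟨2, fun n hn j hj2 hjn => ?_⟩
  have hjn2 : j - 2 < n := by omega
  have hjn1 : j - 1 < n := by omega
  set N := n ^ 2 with hNdef
  have hNval : N = n * n := by rw [hNdef, pow_two]
  have hnN : n ≤ N := by
    have : n * 1 ≤ n * n := Nat.mul_le_mul_left n (by omega)
    omega
  set K := (n - 1) / 8 with hKdef
  set B := ((Finset.Icc 1 N).powersetCard n).filter (fun s =>
      ∃ h : s.card = n,
        ((s.orderIsoOfFin h ⟨j - 1, by omega⟩ : ℕ) : ℝ) -
          ((s.orderIsoOfFin h ⟨j - 2, by omega⟩ : ℕ) : ℝ) < (n : ℝ) / 8) with hBdef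
  have hIcc : (Finset.Icc 1 N).card = N := by rw [Nat.card_Icc]; omega
  -- the erasing map
  set g : Finset ℕ → Finset ℕ := fun S =>
    if h : S.card = n then S.erase (S.orderEmbOfFin h ⟨j - 2, hjn2⟩) else ∅ with hgdef
  -- facts about members of B
  have hBfacts : ∀ S ∈ B, ∃ hS : S.card = n, S ⊆ Finset.Icc 1 N ∧
      g S = S.erase (S.orderEmbOfFin hS ⟨j - 2, hjn2⟩) ∧
      ((S.orderEmbOfFin hS ⟨j - 1, hjn1⟩ : ℕ) : ℝ) -
        ((S.orderEmbOfFin hS ⟨j - 2, hjn2⟩ : ℕ) : ℝ) < (n : ℝ) / 8 := by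
    intro S hS
    obtain ⟨hP, hex⟩ := Finset.mem_filter.mp hS
    obtain ⟨hsub, hcard⟩ := Finset.mem_powersetCard.mp hP
    obtain ⟨h, hlt⟩ := hex
    refine ⟨hcard, hsub, by rw [hgdef]; simp [dif_pos hcard], ?_⟩
    simpa [Finset.coe_orderIsoOfFin_apply] using hlt
  -- g maps B into (n-1)-subsets
  have hmaps : ∀ S ∈ B, g S ∈ (Finset.Icc 1 N).powersetCard (n - 1) := by
    intro S hS
    obtain ⟨hcard, hsub, hgS, -⟩ := hBfacts S hS
    rw [hgS]
    refine Finset.mem_powersetCard.mpr ⟨(Finset.erase_subset _ _).trans hsub, ?_⟩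
    rw [Finset.card_erase_of_mem (S.orderEmbOfFin_mem hcard _), hcard]
  -- fibers of g on B have size at most K
  have hfiber : ∀ T ∈ (Finset.Icc 1 N).powersetCard (n - 1),
      (B.filter (fun S => g S = T)).card ≤ K := by
    intro T hT
    have hTcard : T.card = n - 1 := (Finset.mem_powersetCard.mp hT).2
    have hj2n1 : j - 2 < n - 1 := by omega
    set b : ℕ := T.orderEmbOfFin hTcard ⟨j - 2, hj2n1⟩ with hbdef
    set xf : Finset ℕ → ℕ := fun S =>
      if h : S.card = n then S.orderEmbOfFin h ⟨j - 2, hjn2⟩ else 0 with hxfdef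
    have key : ∀ S ∈ B.filter (fun S => g S = T),
        ∃ hS : S.card = n, xf S = S.orderEmbOfFin hS ⟨j - 2, hjn2⟩ ∧
          xf S ∈ Finset.Ico (b - K) b ∧ S = insert (xf S) T := by
      intro S hSf
      obtain ⟨hSB, hgT⟩ := Finset.mem_filter.mp hSf
      obtain ⟨hcard, hsub, hgS, hlt⟩ := hBfacts S hSB
      set x := S.orderEmbOfFin hcard ⟨j - 2, hjn2⟩ with hxdef
      set bS := S.orderEmbOfFin hcard ⟨j - 1, hjn1⟩ with hbSdef
      have hxf : xf S = x := by rw [hxfdef]; simp [dif_pos hcard]; rfl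
      have hTS : T = S.erase x := by rw [← hgT, hgS]
      have hxltb : x < bS := (S.orderEmbOfFin hcard).strictMono (by
        rw [Fin.lt_def]; simp; omega)
      have hTScard : (S.erase x).card = n - 1 := by rw [hTS] at hTcard; exact hTcard
      have hbbS : b = bS := by
        rw [hbdef]
        rw [orderEmbOfFin_congr hTS hTcard hTScard ⟨j - 2, hj2n1⟩]
        exact orderEmbOfFin_erase hcard ⟨j - 2, hjn2⟩ ⟨j - 1, hjn1⟩ (by simp; omega)
          hTScard (by simp; omega)
      -- gap bound
      have hgap : bS - x ≤ K := by
        have h8 : (8 : ℝ) * ((bS : ℕ) - (x : ℕ) : ℕ) < n := by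
          rw [Nat.cast_sub hxltb.le]
          linarith
        have h8n : 8 * (bS - x) < n := by exact_mod_cast h8
        omega
      have hmem : xf S ∈ Finset.Ico (b - K) b := by
        rw [hxf, hbbS, Finset.mem_Ico]
        omega
      have hins : S = insert (xf S) T := by
        rw [hxf, hTS, Finset.insert_erase (S.orderEmbOfFin_mem hcard _)]
      exact ⟨hcard, hxf, hmem, hins⟩
    calc (B.filter (fun S => g S = T)).card
        ≤ (Finset.Ico (b - K) b).card := by
          apply Finset.card_le_card_of_injOn xf
          · intro S hS; exact (key S hS).2.2.1
          · intro S1 h1 S2 h2 hx12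
            rw [(key S1 h1).2.2.2, (key S2 h2).2.2.2, hx12]
      _ ≤ K := by rw [Nat.card_Ico]; omega
  -- counting
  have hcount : B.card ≤ K * ((Finset.Icc 1 N).powersetCard (n - 1)).card :=
    Finset.card_le_mul_card_image_of_maps_to hmaps K hfiber
  have hPc : ((Finset.Icc 1 N).powersetCard (n - 1)).card = N.choose (n - 1) := by
    rw [Finset.card_powersetCard, hIcc]
  have hPn : ((Finset.Icc 1 N).powersetCard n).card = N.choose n := by
    rw [Finset.card_powersetCard, hIcc]
  -- arithmetic: 8 * (K * C(N, n-1)) ≤ C(N, n)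
  have h1 : N.choose n * n = N.choose (n - 1) * (N - (n - 1)) := by
    have := Nat.choose_succ_right_eq N (n - 1)
    have hn1 : n - 1 + 1 = n := by omega
    rw [hn1] at this
    exact this
  have h8K : 8 * K ≤ n - 1 := by
    have := Nat.div_mul_le_self (n - 1) 8
    omega
  have hsubpos : 0 < N - (n - 1) := by omega
  have key : 8 * (K * N.choose (n - 1)) ≤ N.choose n := by
    apply Nat.le_of_mul_le_mul_right _ hsubpos
    calc 8 * (K * N.choose (n - 1)) * (N - (n - 1))
        = (8 * K) * (N.choose (n - 1) * (N - (n - 1))) := by ring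
      _ = (8 * K) * (N.choose n * n) := by rw [h1]
      _ = ((8 * K) * n) * N.choose n := by ring
      _ ≤ (N - (n - 1)) * N.choose n := by
          apply Nat.mul_le_mul_right
          have h2 : (8 * K) * n ≤ (n - 1) * n := Nat.mul_le_mul_right n h8K
          have h3 : (n - 1) * n = n * n - 1 * n := Nat.sub_mul n 1 n
          omega
      _ = N.choose n * (N - (n - 1)) := by ring
  have hfin : 8 * B.card ≤ N.choose n := by
    calc 8 * B.card ≤ 8 * (K * N.choose (n - 1)) := by
          rw [← hPc]; exact Nat.mul_le_mul_left 8 hcount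
      _ ≤ N.choose n := key
  -- conclude over ℝ
  rw [hPn]
  have : (8 : ℝ) * B.card ≤ (N.choose n : ℝ) := by exact_mod_cast hfin
  linarith
end

section
/- If for all inputs x a randomized algorithm's output O_i(x) is correct with probability at least 1-ε for each i ∈ {1,…,l}, and for every x, P(at least (1-√ε)l outputs correct on x) ≥ 1-√ε, then for every x the average over all ⌈(1-√ε)l⌉-element subsets T of outputs of P(all outputs in T are simultaneously correct on x) is at least (1-√ε)·2^(-l·H(√ε)). -/
open MeasureTheory

noncomputable def binEntropy (p : ℝ) : ℝ :=
  -(p * Real.logb 2 p) - (1 - p) * Real.logb 2 (1 - p)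

lemma nat_sub_le_choose (m k : ℕ) (hk : 1 ≤ k) : m + 1 - k ≤ m.choose k := by
  obtain ⟨k, rfl⟩ := Nat.exists_eq_add_of_le hk
  induction m with
  | zero => simp
  | succ m ih =>
    rw [show 1 + k = k + 1 by omega] at *
    rw [Nat.choose_succ_succ']
    rcases le_or_gt k m with h | h
    · have h1 : 0 < m.choose k := Nat.choose_pos h
      omega
    · have h2 : m.choose (k+1) = 0 := Nat.choose_eq_zero_of_lt (by omega)
      have h3 : 0 < m.choose m := Nat.choose_pos le_rfl
      rcases Nat.lt_or_ge m k with h4 | h4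
      · omega
      · have : m = k := le_antisymm (by omega) h4
        subst this; omega

lemma real_sub_le_choose (m k : ℕ) (hk : 1 ≤ k) :
    (m : ℝ) - ((k : ℝ) - 1) ≤ (m.choose k : ℝ) := by
  rcases le_or_gt k (m + 1) with h | h
  · have h1 := nat_sub_le_choose m k hk
    have h2 : ((m + 1 - k : ℕ) : ℝ) = (m : ℝ) + 1 - k := by
      push_cast [Nat.cast_sub h]; ring
    calc (m : ℝ) - ((k : ℝ) - 1) = ((m + 1 - k : ℕ) : ℝ) := by rw [h2]; ring
      _ ≤ (m.choose k : ℝ) := by exact_mod_cast h1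
  · have : (m : ℝ) - ((k : ℝ) - 1) ≤ 0 := by
      have : (m : ℝ) + 1 < k := by exact_mod_cast h
      linarith
    exact this.trans (by positivity)

lemma choose_mul_le_one (l k : ℕ) (hk : k ≤ l) (t : ℝ) (ht0 : 0 ≤ t) (ht1 : t ≤ 1) :
    (l.choose k : ℝ) * (t ^ k * (1 - t) ^ (l - k)) ≤ 1 := by
  have h := add_pow t (1 - t) l
  rw [add_sub_cancel, one_pow] at h
  have h2 : t ^ k * (1 - t) ^ (l - k) * (l.choose k : ℝ) ≤
      ∑ m ∈ Finset.range (l + 1), t ^ m * (1 - t) ^ (l - m) * ↑(l.choose m) :=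
    Finset.single_le_sum (f := fun m => t ^ m * (1 - t) ^ (l - m) * (l.choose m : ℝ))
      (fun i _ => by
        have : (0:ℝ) ≤ 1 - t := by linarith
        positivity) (Finset.mem_range.mpr (Nat.lt_succ_of_le hk))
  rw [← h] at h2
  linarith [h2]

lemma two_rpow_neg_ent (l : ℕ) (s : ℝ) (h0 : 0 < s) (h1 : s < 1) :
    (2:ℝ) ^ (-(l:ℝ) * binEntropy s) = s ^ ((l:ℝ)*s) * (1-s) ^ ((l:ℝ)*(1-s)) := by
  have hs' : (0:ℝ) < 1 - s := by linarith
  have e : -(l:ℝ) * binEntropy s = Real.logb 2 s * ((l:ℝ)*s) + Real.logb 2 (1-s) * ((l:ℝ)*(1-s)) := by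
    unfold binEntropy; ring
  rw [e, Real.rpow_add two_pos, Real.rpow_mul (by norm_num : (0:ℝ) ≤ 2),
    Real.rpow_mul (by norm_num : (0:ℝ) ≤ 2),
    Real.rpow_logb two_pos (by norm_num) h0, Real.rpow_logb two_pos (by norm_num) hs']

lemma binEntropy_nonneg (s : ℝ) (h0 : 0 < s) (h1 : s < 1) : 0 ≤ binEntropy s := by
  have l1 : Real.logb 2 s ≤ 0 := Real.logb_nonpos one_lt_two h0.le h1.le
  have l2 : Real.logb 2 (1-s) ≤ 0 := Real.logb_nonpos one_lt_two (by linarith) (by linarith)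
  have : (0:ℝ) ≤ 1 - s := by linarith
  unfold binEntropy
  nlinarith

lemma key_bound (l k : ℕ) (hk : k ≤ l) (s : ℝ) (h0 : 0 < s) (h1 : s < 1) :
    (1 - s) * (l.choose k : ℝ) * (2:ℝ) ^ (-(l:ℝ) * binEntropy s) ≤
      (1-s) ^ ((1:ℝ) - ((k:ℝ) - (1-s)*l)) * s ^ ((k:ℝ) - (1-s)*l) := by
  have hs' : (0:ℝ) < 1 - s := by linarith
  set δ : ℝ := (k:ℝ) - (1-s)*l with hδ
  set B : ℝ := (1-s) ^ ((1:ℝ) - δ) * s ^ δ with hB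
  have hBpos : 0 < B := by positivity
  have key_eq : (1 - s) * (2:ℝ) ^ (-(l:ℝ) * binEntropy s)
      = B * ((1-s) ^ k * s ^ (l - k)) := by
    rw [two_rpow_neg_ent l s h0 h1, hB]
    rw [← Real.rpow_natCast (1-s) k, ← Real.rpow_natCast s (l-k),
      Nat.cast_sub hk]
    rw [show (1-s) ^ ((1:ℝ) - δ) * s ^ δ * ((1-s) ^ ((k:ℝ)) * s ^ ((l:ℝ) - k))
        = ((1-s) ^ ((1:ℝ) - δ) * (1-s) ^ ((k:ℝ))) * (s ^ δ * s ^ ((l:ℝ) - k)) by ring,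
      ← Real.rpow_add hs', ← Real.rpow_add h0]
    rw [show (1:ℝ) - δ + k = 1 + (l:ℝ)*(1-s) by rw [hδ]; ring,
      show δ + ((l:ℝ) - k) = (l:ℝ)*s by rw [hδ]; ring,
      Real.rpow_add hs', Real.rpow_one]
    ring
  calc (1 - s) * (l.choose k : ℝ) * (2:ℝ) ^ (-(l:ℝ) * binEntropy s)
      = B * ((l.choose k : ℝ) * ((1-s) ^ k * s ^ (l - k))) := by
        rw [show (1 - s) * (l.choose k : ℝ) * (2:ℝ) ^ (-(l:ℝ) * binEntropy s)
          = ((1 - s) * (2:ℝ) ^ (-(l:ℝ) * binEntropy s)) * (l.choose k : ℝ) by ring, key_eq]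
        ring
    _ ≤ B * 1 := by
        refine mul_le_mul_of_nonneg_left ?_ hBpos.le
        have := choose_mul_le_one l k hk (1-s) hs'.le (by linarith)
        simpa using this
    _ = B := mul_one B

set_option maxHeartbeats 1000000 in
/-- If each of the l outputs is correct with probability at least 1-ε, and with
probability at least 1-√ε at least (1-√ε)l of them are simultaneously correct, then
the average over all ⌈(1-√ε)l⌉-element subsets T of the probability that all outputs
in T are simultaneously correct is at least (1-√ε)·2^(-l·H(√ε)). -/
theorem average_subset_success {Ω : Type*} [MeasurableSpace Ω] (μ : Measure Ω)
    [IsProbabilityMeasure μ] (l : ℕ) (C : Fin l → Set Ω)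
    (hC : ∀ i, MeasurableSet (C i)) (ε : ℝ) (hε0 : 0 < ε) (hε1 : ε < 1)
    (hcorr : ∀ i, ENNReal.ofReal (1 - ε) ≤ μ (C i))
    (hsim : ENNReal.ofReal (1 - Real.sqrt ε) ≤
      μ {ω | (1 - Real.sqrt ε) * l ≤ ∑ i, (C i).indicator (fun _ => (1 : ℝ)) ω}) :
    (1 - Real.sqrt ε) * (2 : ℝ) ^ (-(l : ℝ) * binEntropy (Real.sqrt ε)) ≤
      (∑ T ∈ Finset.univ.powersetCard ⌈(1 - Real.sqrt ε) * l⌉₊,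
          (μ (⋂ i ∈ T, C i)).toReal) / (l.choose ⌈(1 - Real.sqrt ε) * l⌉₊ : ℝ) := by
  set s : ℝ := Real.sqrt ε with hs
  have hs0 : 0 < s := Real.sqrt_pos.mpr hε0
  have hsε : s ^ 2 = ε := Real.sq_sqrt hε0.le
  have hs1 : s < 1 := by nlinarith
  have hs1' : (0:ℝ) < 1 - s := by linarith
  set k : ℕ := ⌈(1 - s) * l⌉₊ with hkdef
  have hkl : k ≤ l := Nat.ceil_le.mpr (by
    have : (1 - s) * l ≤ 1 * l := by
      apply mul_le_mul_of_nonneg_right (by linarith) (Nat.cast_nonneg l)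
    simpa using this)
  have hδ0 : (1 - s) * l ≤ (k : ℝ) := Nat.le_ceil _
  have hδ1 : (k : ℝ) < (1 - s) * l + 1 := Nat.ceil_lt_add_one (by positivity)
  classical
  set P := Finset.powersetCard k (Finset.univ : Finset (Fin l)) with hP
  set A : ℝ := ∑ T ∈ P, (μ (⋂ i ∈ T, C i)).toReal with hA
  have hCpos : (0:ℝ) < (l.choose k : ℝ) := by exact_mod_cast Nat.choose_pos hkl
  rw [le_div_iff₀ hCpos]
  -- goal : (1 - s) * 2 ^ (-(l:ℝ) * binEntropy s) * (l.choose k : ℝ) ≤ A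
  -- set S for pointwise arguments
  have hSsum : ∀ ω : Ω, ∑ i, (C i).indicator (fun _ => (1:ℝ)) ω
      = ((Finset.univ.filter (fun i => ω ∈ C i)).card : ℝ) := by
    intro ω
    rw [Finset.card_filter]
    push_cast
    refine Finset.sum_congr rfl fun i _ => ?_
    by_cases h : ω ∈ C i <;> simp [Set.indicator, h]
  -- M1 : 1 - s ≤ A
  have hM1 : 1 - s ≤ A := by
    have hsub : {ω | (1 - s) * l ≤ ∑ i, (C i).indicator (fun _ => (1 : ℝ)) ω}
        ⊆ ⋃ T ∈ P, ⋂ i ∈ T, C i := by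
      intro ω hω
      simp only [Set.mem_setOf_eq] at hω
      rw [hSsum ω] at hω
      have hcard : k ≤ (Finset.univ.filter (fun i => ω ∈ C i)).card :=
        Nat.ceil_le.mpr hω
      obtain ⟨T, hTS, hTcard⟩ := Finset.exists_subset_card_eq hcard
      have hTP : T ∈ P := Finset.mem_powersetCard.mpr ⟨Finset.subset_univ T, hTcard⟩
      exact Set.mem_biUnion hTP (Set.mem_iInter₂.mpr fun i hi =>
        (Finset.mem_filter.mp (hTS hi)).2)
    have hne : ∀ T ∈ P, μ (⋂ i ∈ T, C i) ≠ ⊤ := fun T _ => (measure_lt_top μ _).ne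
    have h1 : ENNReal.ofReal (1 - s) ≤ ∑ T ∈ P, μ (⋂ i ∈ T, C i) :=
      hsim.trans ((measure_mono hsub).trans (measure_biUnion_finset_le P _))
    have h2 := (ENNReal.ofReal_le_iff_le_toReal (ENNReal.sum_ne_top.mpr hne)).mp h1
    rwa [ENNReal.toReal_sum hne] at h2
  -- M2 : l * (1 - ε) - (k - 1) ≤ A, for 1 ≤ k
  have hM2 : 1 ≤ k → (l : ℝ) * (1 - ε) - ((k : ℝ) - 1) ≤ A := by
    intro hk1
    have hintmeas : ∀ T : Finset (Fin l), MeasurableSet (⋂ i ∈ T, C i) :=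
      fun T => Finset.measurableSet_biInter T fun i _ => hC i
    have hintf : ∀ T : Finset (Fin l),
        Integrable ((⋂ i ∈ T, C i).indicator (fun _ => (1:ℝ))) μ :=
      fun T => (integrable_const (1:ℝ)).indicator (hintmeas T)
    have hintg : ∀ i, Integrable ((C i).indicator (fun _ => (1:ℝ))) μ :=
      fun i => (integrable_const (1:ℝ)).indicator (hC i)
    have hAint : A = ∫ ω, ∑ T ∈ P, (⋂ i ∈ T, C i).indicator (fun _ => (1:ℝ)) ω ∂μ := by
      rw [integral_finset_sum P fun T _ => hintf T, hA]
      refine Finset.sum_congr rfl fun T _ => ?_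
      rw [integral_indicator_const (1:ℝ) (hintmeas T), smul_eq_mul, mul_one]
      rfl
    have hpt : ∀ ω : Ω, (∑ i, (C i).indicator (fun _ => (1:ℝ)) ω) - ((k:ℝ) - 1)
        ≤ ∑ T ∈ P, (⋂ i ∈ T, C i).indicator (fun _ => (1:ℝ)) ω := by
      intro ω
      set S := Finset.univ.filter (fun i => ω ∈ C i) with hSdef
      have h1 : ∑ T ∈ P, (⋂ i ∈ T, C i).indicator (fun _ => (1:ℝ)) ω
          = ((S.card.choose k : ℕ) : ℝ) := by
        have e1 : ∀ T : Finset (Fin l), (⋂ i ∈ T, C i).indicator (fun _ => (1:ℝ)) ω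
            = if T ⊆ S then 1 else 0 := by
          intro T
          by_cases h : T ⊆ S
          · have : ω ∈ ⋂ i ∈ T, C i := Set.mem_iInter₂.mpr fun i hi =>
              (Finset.mem_filter.mp (h hi)).2
            simp [Set.indicator, this, h]
          · have : ω ∉ ⋂ i ∈ T, C i := by
              intro hmem
              exact h fun i hi => Finset.mem_filter.mpr
                ⟨Finset.mem_univ i, Set.mem_iInter₂.mp hmem i hi⟩
            simp [Set.indicator, this, h]
        simp only [e1]
        rw [Finset.sum_boole]
        congr 1
        have : P.filter (fun T => T ⊆ S) = S.powersetCard k := by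
          ext T
          simp only [hP, Finset.mem_filter, Finset.mem_powersetCard]
          constructor
          · rintro ⟨⟨-, hc⟩, hTS⟩; exact ⟨hTS, hc⟩
          · rintro ⟨hTS, hc⟩; exact ⟨⟨Finset.subset_univ T, hc⟩, hTS⟩
        rw [this, Finset.card_powersetCard]
      rw [h1, hSsum ω]
      exact real_sub_le_choose S.card k hk1
    have hle : ∫ ω, ((∑ i, (C i).indicator (fun _ => (1:ℝ)) ω) - ((k:ℝ) - 1)) ∂μ
        ≤ ∫ ω, ∑ T ∈ P, (⋂ i ∈ T, C i).indicator (fun _ => (1:ℝ)) ω ∂μ := by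
      refine integral_mono ?_ (integrable_finset_sum P fun T _ => hintf T) hpt
      exact (integrable_finset_sum Finset.univ fun i _ => hintg i).sub (integrable_const _)
    have hleft : ∫ ω, ((∑ i, (C i).indicator (fun _ => (1:ℝ)) ω) - ((k:ℝ) - 1)) ∂μ
        = (∑ i, (μ (C i)).toReal) - ((k:ℝ) - 1) := by
      rw [integral_sub (integrable_finset_sum Finset.univ fun i _ => hintg i)
        (integrable_const _), integral_const, integral_finset_sum Finset.univ fun i _ => hintg i]
      simp only [measure_univ, ENNReal.toReal_one, probReal_univ, one_smul]
      congr 1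
      refine Finset.sum_congr rfl fun i _ => ?_
      rw [integral_indicator_const (1:ℝ) (hC i), smul_eq_mul, mul_one]
      rfl
    have hsumC : (l : ℝ) * (1 - ε) ≤ ∑ i, (μ (C i)).toReal := by
      have : ∀ i : Fin l, 1 - ε ≤ (μ (C i)).toReal := fun i =>
        (ENNReal.ofReal_le_iff_le_toReal (measure_lt_top μ _).ne).mp (hcorr i)
      calc (l : ℝ) * (1 - ε) = ∑ _i : Fin l, (1 - ε) := by
            rw [Finset.sum_const, Finset.card_univ, Fintype.card_fin, nsmul_eq_mul]
        _ ≤ ∑ i, (μ (C i)).toReal := Finset.sum_le_sum fun i _ => this i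
    rw [hAint]
    calc (l : ℝ) * (1 - ε) - ((k:ℝ) - 1) ≤ (∑ i, (μ (C i)).toReal) - ((k:ℝ) - 1) := by
          linarith
      _ = _ := hleft.symm
      _ ≤ _ := hle
  -- Now the case analysis
  set δ : ℝ := (k:ℝ) - (1-s)*l with hδdef
  have hδnonneg : 0 ≤ δ := by simp [hδdef]; linarith
  have hδle1 : δ ≤ 1 := by simp [hδdef]; linarith
  have hkey := key_bound l k hkl s hs0 hs1
  have hgoal_eq : (1 - s) * (2:ℝ) ^ (-(l:ℝ) * binEntropy s) * (l.choose k : ℝ)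
      = (1 - s) * (l.choose k : ℝ) * (2:ℝ) ^ (-(l:ℝ) * binEntropy s) := by ring
  rw [hgoal_eq]
  rcases le_or_gt s (1 - s) with hcase | hcase
  · -- B ≤ 1 - s ≤ A
    have hB : (1-s) ^ ((1:ℝ) - δ) * s ^ δ ≤ 1 - s := by
      calc (1-s) ^ ((1:ℝ) - δ) * s ^ δ ≤ (1-s) ^ ((1:ℝ) - δ) * (1-s) ^ δ := by
            exact mul_le_mul_of_nonneg_left (Real.rpow_le_rpow hs0.le hcase hδnonneg)
              (by positivity)
        _ = (1-s) ^ ((1:ℝ) - δ + δ) := (Real.rpow_add hs1' _ _).symm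
        _ = 1 - s := by norm_num
    exact hkey.trans (hB.trans hM1)
  · rcases le_or_gt 1 ((1 - s) * l) with hcase2 | hcase2
    · -- B ≤ s ≤ l(1-ε) - (k-1) ≤ A
      have hk1 : 1 ≤ k := by
        rw [← Nat.one_le_cast (α := ℝ)]
        linarith
      have hB : (1-s) ^ ((1:ℝ) - δ) * s ^ δ ≤ s := by
        calc (1-s) ^ ((1:ℝ) - δ) * s ^ δ ≤ s ^ ((1:ℝ) - δ) * s ^ δ := by
              exact mul_le_mul_of_nonneg_right
                (Real.rpow_le_rpow hs1'.le hcase.le (by linarith)) (by positivity)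
          _ = s ^ ((1:ℝ) - δ + δ) := (Real.rpow_add hs0 _ _).symm
          _ = s := by norm_num
      have hsA : s ≤ A := by
        refine le_trans ?_ (hM2 hk1)
        have hεs : ε = s * s := by rw [hs]; exact (Real.mul_self_sqrt hε0.le).symm
        have hkb : (k : ℝ) ≤ (1 - s) * l + 1 := hδ1.le
        nlinarith [mul_le_mul_of_nonneg_left hcase2 hs0.le]
      exact hkey.trans (hB.trans hsA)
    · rcases Nat.eq_zero_or_pos l with hl0 | hl1
      · -- l = 0 : δ = 0, B = 1 - s ≤ A
        have hk0 : k = 0 := by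
          rw [hkdef, hl0]
          simp
        have hδ0' : δ = 0 := by rw [hδdef, hk0, hl0]; simp
        have hB : (1-s) ^ ((1:ℝ) - δ) * s ^ δ = 1 - s := by
          rw [hδ0']; simp [Real.rpow_one]
        exact hkey.trans (hB.le.trans hM1)
      · -- l ≥ 1, (1-s)l < 1 : k = 1
        have hlpos : (0:ℝ) < (1 - s) * l := by
          have : (0:ℝ) < (l:ℝ) := by exact_mod_cast hl1
          positivity
        have hk1 : k = 1 := by
          have h1 : k ≤ 1 := Nat.ceil_le.mpr (by push_cast; linarith)
          have h2 : 1 ≤ k := by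
            rw [hkdef]
            exact Nat.one_le_iff_ne_zero.mpr (by
              simp only [ne_eq, Nat.ceil_eq_zero, not_le]
              exact hlpos)
          omega
        have hA2 : (l : ℝ) * (1 - ε) ≤ A := by
          have := hM2 (by omega)
          rw [hk1] at this
          simpa using this
        have hr1 : (2:ℝ) ^ (-(l:ℝ) * binEntropy s) ≤ 1 :=
          Real.rpow_le_one_of_one_le_of_nonpos (by norm_num)
            (by
              have h := binEntropy_nonneg s hs0 hs1
              have : (0:ℝ) ≤ (l:ℝ) := Nat.cast_nonneg l
              nlinarith)
        have hchoose1 : (l.choose k : ℝ) = (l : ℝ) := by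
          rw [hk1, Nat.choose_one_right]
        rw [hchoose1]
        have hεs : ε = s * s := by rw [hs]; exact (Real.mul_self_sqrt hε0.le).symm
        have hse : 1 - s ≤ 1 - ε := by nlinarith [hεs, hs0.le, hs1.le]
        have hr0 : (0:ℝ) ≤ (2:ℝ) ^ (-(l:ℝ) * binEntropy s) := by positivity
        have hlnn : (0:ℝ) ≤ (l : ℝ) := Nat.cast_nonneg l
        calc (1 - s) * (l:ℝ) * (2:ℝ) ^ (-(l:ℝ) * binEntropy s)
            ≤ (1 - s) * (l:ℝ) * 1 := by
              apply mul_le_mul_of_nonneg_left hr1 (by positivity)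
          _ = (1 - s) * (l:ℝ) := by ring
          _ ≤ (1 - ε) * (l:ℝ) := mul_le_mul_of_nonneg_right hse hlnn
          _ = (l:ℝ) * (1 - ε) := by ring
          _ ≤ A := hA2
end
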